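/- Let A ∈ ℝ^{M×n} with k ≤ min(M,n). If every row-consecutive k-minor of A is ≥ 0, then every k-minor of A is ≥ 0; likewise, if every row-consecutive k-minor of A is ≤ 0, then every k-minor of A is ≤ 0. Consequently, if all row-consecutive k-minors of A share the same sign, then A is k-sign consistent. -/

import Mathlib

/-- A row-consecutive `k`-minor of an `M × n` matrix `A`: for a strictly monotone
column selection `q : Fin k → Fin n` and offsets `p : Fin k → ℕ` with `p j + k ≤ M`,
it is the determinant of the `k × k` matrix whose `(i,j)` entry is `A (p j + i) (q j)`. -/
def rowConsecMinor {M n : ℕ} (k : ℕ) (A : Matrix (Fin M) (Fin n) ℝ)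
    (p : Fin k → ℕ) (hp : ∀ j, p j + k ≤ M) (q : Fin k → Fin n) : ℝ :=
  Matrix.det (Matrix.of fun i j : Fin k =>
    A ⟨p j + (i : ℕ), by have h1 := hp j; have h2 := i.isLt; omega⟩ (q j))

/-- A matrix is `k`-sign consistent if all its `k`-minors are `≥ 0` or all are `≤ 0`. -/
def SignConsistent {m n : ℕ} (k : ℕ) (A : Matrix (Fin m) (Fin n) ℝ) : Prop :=
  (∀ (ρ : Fin k → Fin m) (κ : Fin k → Fin n), StrictMono ρ → StrictMono κ →
      0 ≤ (A.submatrix ρ κ).det) ∨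
  (∀ (ρ : Fin k → Fin m) (κ : Fin k → Fin n), StrictMono ρ → StrictMono κ →
      (A.submatrix ρ κ).det ≤ 0)

namespace Stmt2Aux
open MvPolynomial Matrix Finset


theorem poly_tel {R : Type*} [CommRing R] (t y : R) (a b : ℕ) (hab : a ≤ b) :
    (t - y) * ∑ m ∈ Finset.Ico a b, t ^ (b - 1 - m) * y ^ m
      = t ^ (b - a) * y ^ a - y ^ b := by
  rw [Finset.sum_Ico_eq_sum_range]
  have h1 : ∀ l ∈ Finset.range (b - a), t ^ (b - 1 - (a + l)) * y ^ (a + l)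
      = (y ^ l * t ^ ((b-a) - 1 - l)) * y ^ a := by
    intro l hl
    rw [Finset.mem_range] at hl
    have : b - 1 - (a + l) = (b - a) - 1 - l := by omega
    rw [this, pow_add]; ring
  rw [Finset.sum_congr rfl h1, ← Finset.sum_mul]
  have := geom_sum₂_mul y t (b - a)
  calc (t - y) * ((∑ l ∈ Finset.range (b-a), y ^ l * t ^ ((b-a) - 1 - l)) * y ^ a)
      = -((∑ l ∈ Finset.range (b-a), y ^ l * t ^ ((b-a) - 1 - l)) * (y - t)) * y ^ a := by ring
    _ = -(y ^ (b-a) - t ^ (b-a)) * y ^ a := by rw [this]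
    _ = t ^ (b - a) * y ^ a - y ^ (b-a) * y ^ a := by ring
    _ = t ^ (b - a) * y ^ a - y ^ b := by rw [← pow_add]; congr 2; omega

theorem tel_sum (k : ℕ) (ρ : Fin (k+1) → ℕ) (hρ : StrictMono ρ) :
    ρ 0 + ∑ i : Fin k, (ρ i.succ - ρ i.castSucc) = ρ (Fin.last k) := by
  induction k with
  | zero => simp [Fin.last]
  | succ k ih =>
    rw [Fin.sum_univ_castSucc]
    have h2 := ih (ρ ∘ Fin.castSucc) (hρ.comp (Fin.strictMono_castSucc))
    simp only [Function.comp_apply, Fin.succ_castSucc, Fin.castSucc_zero] at h2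
    have h3 : ρ (Fin.last k).castSucc ≤ ρ ((Fin.last k).succ) :=
      le_of_lt (hρ Fin.castSucc_lt_succ)
    have h4 : (Fin.last k).succ = Fin.last (k+1) := Fin.succ_last k
    rw [h4] at h3
    rw [Fin.succ_last]
    simp only [Fin.succ_castSucc, Nat.succ_eq_add_one] at h2 h3 ⊢
    omega

theorem tel_bound (k : ℕ) (ρ : Fin (k+1) → ℕ) (hρ : StrictMono ρ) (r : Fin k → ℕ)
    (hr : ∀ i, ρ i.castSucc ≤ r i) :
    ρ 0 + (∑ i : Fin k, (ρ i.succ - 1 - r i)) + k ≤ ρ (Fin.last k) := by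
  have h1 : ∀ i : Fin k, ρ i.castSucc < ρ i.succ := fun i => hρ (Fin.castSucc_lt_succ (i := i))
  have hb : ∀ i : Fin k, (ρ i.succ - 1 - r i) + 1 ≤ ρ i.succ - ρ i.castSucc := by
    intro i; have := h1 i; have := hr i; omega
  have := Finset.sum_le_sum (fun i (_ : i ∈ Finset.univ) => hb i)
  rw [Finset.sum_add_distrib] at this
  simp only [Finset.sum_const, Finset.card_univ, Fintype.card_fin, smul_eq_mul, mul_one] at this
  have h2 := tel_sum k ρ hρ
  omega

section Branch
variable {k : ℕ}

noncomputable def gent (ρ : Fin (k+1) → ℕ) (i : Fin k) (y : MvPolynomial (Fin (k+1)) ℤ) :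
    MvPolynomial (Fin (k+1)) ℤ :=
  ∑ m ∈ Finset.Ico (ρ i.castSucc) (ρ i.succ),
    X (Fin.last k) ^ (ρ i.succ - 1 - m) * y ^ m

noncomputable def Gmat (ρ : Fin (k+1) → ℕ) : Matrix (Fin k) (Fin k) (MvPolynomial (Fin (k+1)) ℤ) :=
  Matrix.of fun i j => gent ρ i (X j.castSucc)

theorem branching (ρ : Fin (k+1) → ℕ) (hρ : StrictMono ρ) :
    Matrix.det (Matrix.of fun i j : Fin (k+1) => (X j : MvPolynomial (Fin (k+1)) ℤ) ^ ρ i)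
      = X (Fin.last k) ^ ρ 0 *
        ((∏ j : Fin k, (X (Fin.last k) - X j.castSucc)) * Matrix.det (Gmat ρ)) := by
  classical
  set t : MvPolynomial (Fin (k+1)) ℤ := X (Fin.last k) with ht
  set A : Matrix (Fin (k+1)) (Fin (k+1)) (MvPolynomial (Fin (k+1)) ℤ) :=
    Matrix.of fun i j => (X j : MvPolynomial (Fin (k+1)) ℤ) ^ ρ i with hA
  set d : Fin k → ℕ := fun i => ρ i.succ - ρ i.castSucc with hd
  -- pointwise telescope
  have hpt : ∀ (i : Fin k) (y : MvPolynomial (Fin (k+1)) ℤ),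
      (t - y) * gent ρ i y = t ^ d i * y ^ ρ i.castSucc - y ^ ρ i.succ := by
    intro i y
    exact poly_tel t y (ρ i.castSucc) (ρ i.succ) (le_of_lt (hρ (Fin.castSucc_lt_succ (i := i))))
  set L : Matrix (Fin (k+1)) (Fin (k+1)) (MvPolynomial (Fin (k+1)) ℤ) :=
    Matrix.of fun i i' =>
      if i' = i then (if h : (i:ℕ) < k then t ^ d ⟨i, h⟩ else 1)
      else if (i':ℕ) = (i:ℕ)+1 then -1 else 0 with hL
  set A' : Matrix (Fin (k+1)) (Fin (k+1)) (MvPolynomial (Fin (k+1)) ℤ) :=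
    Matrix.of fun i j =>
      if h : (i:ℕ) < k then (t - X j) * gent ρ ⟨i, h⟩ (X j)
      else (X j : MvPolynomial (Fin (k+1)) ℤ) ^ ρ (Fin.last k) with hA'
  have hLA : L * A = A' := by
    ext i j
    rw [Matrix.mul_apply]
    by_cases h : (i:ℕ) < k
    · have i1lt : (i:ℕ)+1 < k+1 := by omega
      set i₁ : Fin (k+1) := ⟨(i:ℕ)+1, i1lt⟩ with hi₁
      have hsplit : ∀ i' : Fin (k+1), L i i' * A i' j
          = (if i' = i then t ^ d ⟨i, h⟩ * A i' j else 0)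
            + (if i' = i₁ then -(A i' j) else 0) := by
        intro i'
        simp only [hL, Matrix.of_apply]
        by_cases h1 : i' = i
        · have : ¬ (i' = i₁) := by
            intro hc; rw [h1] at hc; exact absurd (congrArg Fin.val hc) (by simp [hi₁])
          rw [if_pos h1, if_pos h1, dif_pos h, if_neg this]; ring
        · rw [if_neg h1, if_neg h1]
          by_cases h2 : i' = i₁
          · have : ((i':ℕ) = (i:ℕ)+1) := by rw [h2]
            rw [if_pos this, if_pos h2]; ring
          · have : ¬ ((i':ℕ) = (i:ℕ)+1) := by
              intro hc; exact h2 (Fin.ext hc)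
            rw [if_neg this, if_neg h2]; ring
      rw [Finset.sum_congr rfl (fun i' _ => hsplit i'), Finset.sum_add_distrib,
        Finset.sum_ite_eq' Finset.univ i, Finset.sum_ite_eq' Finset.univ i₁]
      simp only [Finset.mem_univ, if_pos]
      have e1 : A i j = (X j : MvPolynomial (Fin (k+1)) ℤ) ^ ρ ((⟨i, h⟩ : Fin k).castSucc) := by
        simp only [hA, Matrix.of_apply]; congr 1
      have e2 : A i₁ j = (X j : MvPolynomial (Fin (k+1)) ℤ) ^ ρ ((⟨i, h⟩ : Fin k).succ) := by
        simp only [hA, Matrix.of_apply]; congr 1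
      rw [e1, e2, hA']
      simp only [Matrix.of_apply]
      rw [dif_pos h, hpt]
      ring
    · have hi : i = Fin.last k := by
        apply Fin.ext; have := i.isLt; simp only [Fin.val_last]; omega
      have hsplit : ∀ i' : Fin (k+1), L i i' * A i' j
          = (if i' = i then A i' j else 0) := by
        intro i'
        simp only [hL, Matrix.of_apply]
        by_cases h1 : i' = i
        · rw [if_pos h1, if_pos h1, dif_neg h]; ring
        · have : ¬ ((i':ℕ) = (i:ℕ)+1) := by
            have := i'.isLt; have := i.isLt; intro hc; omega
          rw [if_neg h1, if_neg this, if_neg h1]; ring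
      rw [Finset.sum_congr rfl (fun i' _ => hsplit i'), Finset.sum_ite_eq' Finset.univ i]
      simp only [Finset.mem_univ, if_pos]
      rw [hA']
      simp only [hA, Matrix.of_apply]
      rw [dif_neg h, hi]
  -- det L
  have hdetL : L.det = t ^ (∑ i : Fin k, d i) := by
    have htri : L.BlockTriangular id := by
      intro a b hab
      simp only [id_eq] at hab
      have h1 : ¬ (b = a) := by intro hc; subst hc; exact lt_irrefl _ hab
      have h2 : ¬ ((b:ℕ) = (a:ℕ)+1) := by
        have : (b:ℕ) < (a:ℕ) := hab
        omega
      simp only [hL, Matrix.of_apply, if_neg h1, if_neg h2]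
    rw [Matrix.det_of_upperTriangular htri]
    rw [Fin.prod_univ_castSucc]
    have hnl : ¬ ((Fin.last k : ℕ) < k) := by simp
    have hlast : L (Fin.last k) (Fin.last k) = 1 := by
      simp only [hL, Matrix.of_apply, dif_neg hnl]
      simp
    have hcast : ∀ i : Fin k, L i.castSucc i.castSucc = t ^ d i := by
      intro i
      have hlt : ((i.castSucc : Fin (k+1)) : ℕ) < k := by simp
      simp only [hL, Matrix.of_apply, dif_pos hlt]
      simp
    rw [hlast, Finset.prod_congr rfl (fun i _ => hcast i), mul_one,
      Finset.prod_pow_eq_pow_sum]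
  -- det A' via blocks
  have hdetA' : A'.det = (∏ j : Fin k, (t - X j.castSucc)) * (Gmat ρ).det * t ^ ρ (Fin.last k) := by
    have hre := Matrix.det_submatrix_equiv_self (finSumFinEquiv (m := k) (n := 1)) A'
    set B11 : Matrix (Fin k) (Fin k) (MvPolynomial (Fin (k+1)) ℤ) :=
      Matrix.of fun i j => (t - X j.castSucc) * (Gmat ρ) i j with hB11
    set B21 : Matrix (Fin 1) (Fin k) (MvPolynomial (Fin (k+1)) ℤ) :=
      Matrix.of fun _ j => (X j.castSucc : MvPolynomial (Fin (k+1)) ℤ) ^ ρ (Fin.last k) with hB21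
    set B22 : Matrix (Fin 1) (Fin 1) (MvPolynomial (Fin (k+1)) ℤ) :=
      Matrix.of fun _ _ => t ^ ρ (Fin.last k) with hB22
    have heinl : ∀ j : Fin k, finSumFinEquiv (Sum.inl j) = (Fin.castSucc j : Fin (k+1)) := fun j => rfl
    have heinr : ∀ j : Fin 1, finSumFinEquiv (Sum.inr j) = Fin.last k := by
      intro j
      apply Fin.ext
      have : (j : ℕ) = 0 := by omega
      simp [this]
    have hblocks : A'.submatrix (finSumFinEquiv (m := k) (n := 1)) (finSumFinEquiv (m := k) (n := 1))
        = Matrix.fromBlocks B11 0 B21 B22 := by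
      apply Matrix.ext
      intro i j
      cases i with
      | inl i =>
        cases j with
        | inl j =>
          simp only [Matrix.submatrix_apply, Matrix.fromBlocks_apply₁₁, heinl]
          simp only [hA', Matrix.of_apply]
          rw [dif_pos (by simpa using i.isLt)]
          simp only [hB11, Matrix.of_apply, Gmat]
          congr 2
        | inr j =>
          simp only [Matrix.submatrix_apply, Matrix.fromBlocks_apply₁₂, Matrix.zero_apply,
            heinl, heinr]
          simp only [hA', Matrix.of_apply]
          rw [dif_pos (by simpa using i.isLt), ← ht, sub_self, zero_mul]
      | inr i =>
        cases j with
        | inl j =>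
          simp only [Matrix.submatrix_apply, Matrix.fromBlocks_apply₂₁, heinl, heinr]
          simp only [hA', Matrix.of_apply]
          rw [dif_neg (by simp)]
          simp [hB21]
        | inr j =>
          simp only [Matrix.submatrix_apply, Matrix.fromBlocks_apply₂₂, heinr]
          simp only [hA', Matrix.of_apply]
          rw [dif_neg (by simp)]
          simp [hB22, ht]
    rw [hblocks] at hre
    rw [← hre, Matrix.det_fromBlocks_zero₁₂]
    have hb11 : B11.det = (∏ j : Fin k, (t - X j.castSucc)) * (Gmat ρ).det := by
      rw [hB11, Matrix.det_mul_row]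
    have hb22 : B22.det = t ^ ρ (Fin.last k) := by
      rw [Matrix.det_fin_one]
      simp [hB22]
    rw [hb11, hb22]
  -- combine
  have hcomb : t ^ (∑ i : Fin k, d i) * A.det
      = t ^ (∑ i : Fin k, d i) * (t ^ ρ 0 * ((∏ j : Fin k, (t - X j.castSucc)) * (Gmat ρ).det)) := by
    have htel : ρ 0 + ∑ i : Fin k, d i = ρ (Fin.last k) := tel_sum k ρ hρ
    have h1 : (L * A).det = t ^ (∑ i : Fin k, d i) * A.det := by
      rw [Matrix.det_mul, hdetL]
    have h2 : (L * A).det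
        = t ^ (∑ i : Fin k, d i) * (t ^ ρ 0 * ((∏ j : Fin k, (t - X j.castSucc)) * (Gmat ρ).det)) := by
      rw [hLA, hdetA', ← htel, pow_add]
      ring
    rw [← h1, h2]
  have hX : (t : MvPolynomial (Fin (k+1)) ℤ) ^ (∑ i : Fin k, d i) ≠ 0 :=
    pow_ne_zero _ (MvPolynomial.X_ne_zero _)
  exact mul_left_cancel₀ hX hcomb

end Branch

section Aux
variable {k : ℕ}

theorem Gmat_delta :
    Gmat (fun i : Fin (k+1) => (i:ℕ))
      = Matrix.of (fun i j : Fin k => (X j.castSucc : MvPolynomial (Fin (k+1)) ℤ) ^ (i:ℕ)) := by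
  apply Matrix.ext
  intro i j
  simp only [Gmat, gent, Matrix.of_apply, Fin.val_succ, Fin.coe_castSucc]
  rw [show Finset.Ico (i:ℕ) ((i:ℕ)+1) = {(i:ℕ)} from by
    ext m; simp [Finset.mem_Ico]; try omega]
  rw [Finset.sum_singleton]
  simp
  try simp

theorem det_pow_rename (r : Fin k → ℕ) :
    Matrix.det (Matrix.of fun i j : Fin k =>
        (X (Fin.castSucc j) : MvPolynomial (Fin (k+1)) ℤ) ^ r i)
      = rename Fin.castSucc
          (Matrix.det (Matrix.of fun i j : Fin k => (X j : MvPolynomial (Fin k) ℤ) ^ r i)) := by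
  have h := RingHom.map_det ((rename (Fin.castSucc : Fin k → Fin (k+1))).toRingHom)
    (Matrix.of fun i j : Fin k => (X j : MvPolynomial (Fin k) ℤ) ^ r i)
  rw [show ((rename (Fin.castSucc : Fin k → Fin (k+1))).toRingHom :
      MvPolynomial (Fin k) ℤ →+* MvPolynomial (Fin (k+1)) ℤ).mapMatrix
        (Matrix.of fun i j : Fin k => (X j : MvPolynomial (Fin k) ℤ) ^ r i)
      = Matrix.of (fun i j : Fin k => (X (Fin.castSucc j) : MvPolynomial (Fin (k+1)) ℤ) ^ r i) from by
    apply Matrix.ext; intro i j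
    simp [RingHom.mapMatrix_apply]] at h
  exact h.symm

theorem Gmat_expand (ρ : Fin (k+1) → ℕ) :
    (Gmat ρ).det = ∑ r ∈ Fintype.piFinset (fun i : Fin k => Finset.Ico (ρ i.castSucc) (ρ i.succ)),
      (X (Fin.last k) : MvPolynomial (Fin (k+1)) ℤ) ^ (∑ i : Fin k, (ρ i.succ - 1 - r i)) *
        Matrix.det (Matrix.of fun i j : Fin k =>
          (X (Fin.castSucc j) : MvPolynomial (Fin (k+1)) ℤ) ^ (r i)) := by
  classical
  have hMeq : Gmat ρ = Matrix.of (fun i : Fin k => ∑ m ∈ Finset.Ico (ρ i.castSucc) (ρ i.succ),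
      (fun j : Fin k => (X (Fin.last k) : MvPolynomial (Fin (k+1)) ℤ) ^ (ρ i.succ - 1 - m)
        * X (Fin.castSucc j) ^ m)) := by
    apply Matrix.ext
    intro i j
    simp [Gmat, gent, Finset.sum_apply]
  have hms := (Matrix.detRowAlternating (R := MvPolynomial (Fin (k+1)) ℤ)
      (n := Fin k)).toMultilinearMap.map_sum_finset
    (fun i m => (fun j : Fin k => (X (Fin.last k) : MvPolynomial (Fin (k+1)) ℤ) ^ (ρ i.succ - 1 - m)
        * X (Fin.castSucc j) ^ m))
    (fun i => Finset.Ico (ρ i.castSucc) (ρ i.succ))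
  calc (Gmat ρ).det
      = (Matrix.detRowAlternating (R := MvPolynomial (Fin (k+1)) ℤ)
          (n := Fin k)).toMultilinearMap (fun i : Fin k =>
          ∑ m ∈ Finset.Ico (ρ i.castSucc) (ρ i.succ),
            (fun j : Fin k => (X (Fin.last k) : MvPolynomial (Fin (k+1)) ℤ) ^ (ρ i.succ - 1 - m)
              * X (Fin.castSucc j) ^ m)) := by rw [hMeq]; rfl
    _ = ∑ r ∈ Fintype.piFinset (fun i : Fin k => Finset.Ico (ρ i.castSucc) (ρ i.succ)),
          (Matrix.detRowAlternating (R := MvPolynomial (Fin (k+1)) ℤ)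
            (n := Fin k)).toMultilinearMap (fun i : Fin k => fun j : Fin k =>
              (X (Fin.last k) : MvPolynomial (Fin (k+1)) ℤ) ^ (ρ i.succ - 1 - r i)
                * X (Fin.castSucc j) ^ r i) := hms
    _ = ∑ r ∈ Fintype.piFinset (fun i : Fin k => Finset.Ico (ρ i.castSucc) (ρ i.succ)),
          (X (Fin.last k) : MvPolynomial (Fin (k+1)) ℤ) ^ (∑ i : Fin k, (ρ i.succ - 1 - r i)) *
            Matrix.det (Matrix.of fun i j : Fin k =>
              (X (Fin.castSucc j) : MvPolynomial (Fin (k+1)) ℤ) ^ (r i)) := by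
        apply Finset.sum_congr rfl
        intro r _
        have hsm : (fun i : Fin k => (fun j : Fin k =>
            (X (Fin.last k) : MvPolynomial (Fin (k+1)) ℤ) ^ (ρ i.succ - 1 - r i) * X (Fin.castSucc j) ^ r i))
            = fun i => ((X (Fin.last k) : MvPolynomial (Fin (k+1)) ℤ) ^ (ρ i.succ - 1 - r i))
              • (fun j : Fin k => (X (Fin.castSucc j) : MvPolynomial (Fin (k+1)) ℤ) ^ r i) := by
          funext i j
          simp [smul_eq_mul]
        rw [hsm, MultilinearMap.map_smul_univ, Finset.prod_pow_eq_pow_sum, smul_eq_mul]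
        rfl

end Aux

section Coeffs

theorem coeff_rename_nonneg {σ τ : Type*} (f : σ → τ) (hf : Function.Injective f)
    (φ : MvPolynomial σ ℤ) (h : ∀ u, 0 ≤ MvPolynomial.coeff u φ) (d : τ →₀ ℕ) :
    0 ≤ MvPolynomial.coeff d (rename f φ) := by
  by_cases hz : MvPolynomial.coeff d (rename f φ) = 0
  · rw [hz]
  · obtain ⟨u, hu, -⟩ := coeff_rename_ne_zero f φ d hz
    rw [← hu, MvPolynomial.coeff_rename_mapDomain f hf]
    exact h u

theorem coeff_mul_nonneg {σ : Type*} [DecidableEq σ] (f g : MvPolynomial σ ℤ)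
    (hf : ∀ u, 0 ≤ MvPolynomial.coeff u f) (hg : ∀ u, 0 ≤ MvPolynomial.coeff u g) (d : σ →₀ ℕ) :
    0 ≤ MvPolynomial.coeff d (f * g) := by
  rw [MvPolynomial.coeff_mul]
  exact Finset.sum_nonneg fun x _ => mul_nonneg (hf x.1) (hg x.2)

end Coeffs

theorem schur_exists : ∀ (k : ℕ) (ρ : Fin k → ℕ), StrictMono ρ →
    ∃ c : MvPolynomial (Fin k) ℤ,
      (∀ p, 0 ≤ c.coeff p) ∧
      (∀ p ∈ c.support, ∀ (j : Fin k) (N : ℕ), (∀ i, ρ i < N) → (p j) + k ≤ N) ∧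
      Matrix.det (Matrix.of fun i j : Fin k => (X j : MvPolynomial (Fin k) ℤ) ^ ρ i)
        = c * Matrix.det (Matrix.of fun i j : Fin k => (X j : MvPolynomial (Fin k) ℤ) ^ (i:ℕ)) := by
  intro k
  induction k with
  | zero =>
    intro ρ _
    refine ⟨1, fun p => ?_, fun p hp j => absurd j.isLt (by omega), by simp [Matrix.det_fin_zero]⟩
    rw [MvPolynomial.coeff_one]
    split <;> norm_num
  | succ k ih =>
    intro ρ hρ
    classical
    set t : MvPolynomial (Fin (k+1)) ℤ := X (Fin.last k) with ht
    set Aset : Fin k → Finset ℕ := fun i => Finset.Ico (ρ i.castSucc) (ρ i.succ) with hAset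
    -- strict monotonicity of members
    have hsm : ∀ r ∈ Fintype.piFinset Aset, StrictMono r := by
      intro r hr
      rw [Fintype.mem_piFinset] at hr
      intro a b hab
      have h1 : r a < ρ a.succ := (Finset.mem_Ico.mp (hr a)).2
      have h2 : ρ b.castSucc ≤ r b := (Finset.mem_Ico.mp (hr b)).1
      have h3 : ρ a.succ ≤ ρ b.castSucc := by
        apply hρ.monotone
        rw [Fin.le_def]
        simp only [Fin.val_succ, Fin.coe_castSucc]
        exact hab
      omega
    set cd : (Fin k → ℕ) → MvPolynomial (Fin k) ℤ :=
      fun r => if h : StrictMono r then (ih r h).choose else 0 with hcd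
    have hcd_spec : ∀ (r : Fin k → ℕ) (h : StrictMono r),
        (∀ p, 0 ≤ (cd r).coeff p) ∧
        (∀ p ∈ (cd r).support, ∀ (j : Fin k) (N : ℕ), (∀ i, r i < N) → (p j) + k ≤ N) ∧
        Matrix.det (Matrix.of fun i j : Fin k => (X j : MvPolynomial (Fin k) ℤ) ^ r i)
          = cd r * Matrix.det (Matrix.of fun i j : Fin k => (X j : MvPolynomial (Fin k) ℤ) ^ (i:ℕ)) := by
      intro r h
      rw [hcd]
      simp only [dif_pos h]
      exact (ih r h).choose_spec
    set E : (Fin k → ℕ) → ℕ := fun r => ρ 0 + ∑ i : Fin k, (ρ i.succ - 1 - r i) with hE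
    set c : MvPolynomial (Fin (k+1)) ℤ :=
      ∑ r ∈ Fintype.piFinset Aset, t ^ (E r) * rename Fin.castSucc (cd r) with hc
    refine ⟨c, ?_, ?_, ?_⟩
    · -- coefficient nonnegativity
      intro p
      rw [hc, MvPolynomial.coeff_sum]
      apply Finset.sum_nonneg
      intro r hr
      apply coeff_mul_nonneg
      · intro u
        rw [ht, MvPolynomial.coeff_X_pow]
        split <;> norm_num
      · intro u
        apply coeff_rename_nonneg _ (Fin.castSucc_injective k)
        intro v
        by_cases hsr : StrictMono r
        · exact (hcd_spec r hsr).1 v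
        · have hz : cd r = 0 := by simp only [hcd]; rw [dif_neg hsr]
          simp [hz]
    · -- support bound
      intro p hp j N hN
      rw [hc] at hp
      obtain ⟨r, hrmem, hpr⟩ := Finset.mem_biUnion.mp (MvPolynomial.support_sum hp)
      have hrI := Fintype.mem_piFinset.mp hrmem
      have hsr : StrictMono r := hsm r hrmem
      obtain ⟨p1, hp1, p2, hp2, hps⟩ := Finset.mem_add.mp (MvPolynomial.support_mul _ _ hpr)
      rw [ht, MvPolynomial.support_X_pow] at hp1
      have hp1' : p1 = Finsupp.single (Fin.last k) (E r) := Finset.mem_singleton.mp hp1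
      rw [MvPolynomial.support_rename_of_injective (Fin.castSucc_injective k)] at hp2
      obtain ⟨u, hu, hpu⟩ := Finset.mem_image.mp hp2
      have hEb : E r + k ≤ ρ (Fin.last k) := by
        have h1 := tel_bound k ρ hρ r (fun i => (Finset.mem_Ico.mp (hrI i)).1)
        simp only [hE]
        omega
      have hρlast : ρ (Fin.last k) < N := hN _
      have hpj : p j = p1 j + p2 j := by rw [← hps]; rfl
      induction j using Fin.lastCases with
      | last =>
        have hmd : p2 (Fin.last k) = 0 := by
          rw [← hpu]
          apply Finsupp.mapDomain_notin_range
          rintro ⟨a, ha⟩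
          have := congrArg Fin.val ha
          simp only [Fin.coe_castSucc, Fin.val_last] at this
          exact absurd this (Nat.ne_of_lt a.isLt)
        rw [hpj, hp1', hmd]
        rw [Finsupp.single_apply, if_pos rfl]
        omega
      | cast j' =>
        have h1 : p1 j'.castSucc = 0 := by
          rw [hp1', Finsupp.single_apply, if_neg]
          intro hc'
          have := congrArg Fin.val hc'
          simp only [Fin.coe_castSucc, Fin.val_last] at this
          exact absurd this.symm (Nat.ne_of_lt j'.isLt)
        have h2 : p2 j'.castSucc = u j' := by
          rw [← hpu]
          exact Finsupp.mapDomain_apply (Fin.castSucc_injective k) u j'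
        have hub : u j' + k ≤ N - 1 := by
          apply (hcd_spec r hsr).2.1 u hu j' (N-1)
          intro i
          have ha : r i < ρ i.succ := (Finset.mem_Ico.mp (hrI i)).2
          have hb : ρ i.succ ≤ ρ (Fin.last k) := by
            apply hρ.monotone
            rw [Fin.le_def]
            simp only [Fin.val_succ, Fin.val_last]
            omega
          omega
        rw [hpj, h1, h2]
        omega
    · -- the determinant identity
      have hbr := branching ρ hρ
      have hmono_id : StrictMono (fun i : Fin (k+1) => (i:ℕ)) := fun a b h => h
      have hbrδ := branching (fun i : Fin (k+1) => (i:ℕ)) hmono_id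
      have hδ : Matrix.det (Matrix.of fun i j : Fin (k+1) => (X j : MvPolynomial (Fin (k+1)) ℤ) ^ ((i:Fin (k+1)):ℕ))
          = (∏ j : Fin k, (t - X j.castSucc)) * rename Fin.castSucc
              (Matrix.det (Matrix.of fun i j : Fin k => (X j : MvPolynomial (Fin k) ℤ) ^ ((i : Fin k):ℕ))) := by
        rw [hbrδ, Gmat_delta, det_pow_rename (fun i : Fin k => (i:ℕ))]
        simp [ht]
      have hterm : ∀ r ∈ Fintype.piFinset Aset,
          (X (Fin.last k) : MvPolynomial (Fin (k+1)) ℤ) ^ (∑ i : Fin k, (ρ i.succ - 1 - r i)) *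
            Matrix.det (Matrix.of fun i j : Fin k =>
              (X (Fin.castSucc j) : MvPolynomial (Fin (k+1)) ℤ) ^ (r i))
          = t ^ (∑ i : Fin k, (ρ i.succ - 1 - r i)) *
              (rename Fin.castSucc (cd r) * rename Fin.castSucc
                (Matrix.det (Matrix.of fun i j : Fin k => (X j : MvPolynomial (Fin k) ℤ) ^ ((i:Fin k):ℕ)))) := by
        intro r hr
        rw [det_pow_rename, (hcd_spec r (hsm r hr)).2.2, _root_.map_mul, ht]
      rw [hbr, Gmat_expand ρ, Finset.sum_congr rfl hterm, hδ, hc, Finset.sum_mul,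
        Finset.mul_sum, Finset.mul_sum]
      apply Finset.sum_congr rfl
      intro r hr
      simp only [hE]
      rw [pow_add]
      ring

section Transfer
variable {k : ℕ}

theorem prod_monomial_one {ι : Type*} (s : Finset ι) (g : ι → (Fin k →₀ ℕ)) :
    (∏ i ∈ s, (MvPolynomial.monomial (g i) (1:ℤ))) = MvPolynomial.monomial (∑ i ∈ s, g i) 1 := by
  classical
  induction s using Finset.cons_induction with
  | empty => simp
  | cons a s ha ih =>
    rw [Finset.prod_cons, Finset.sum_cons, ih, MvPolynomial.monomial_mul, one_mul]

theorem prod_X_pow (u : Fin k → ℕ) :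
    (∏ i : Fin k, (X i : MvPolynomial (Fin k) ℤ) ^ u i)
      = MvPolynomial.monomial (∑ i : Fin k, Finsupp.single i (u i)) 1 := by
  rw [Finset.prod_congr rfl (fun i _ => MvPolynomial.X_pow_eq_monomial (e := u i) (n := i)),
    prod_monomial_one]

theorem sum_single_apply (u : Fin k → ℕ) (j : Fin k) :
    (∑ i : Fin k, Finsupp.single i (u i)) j = u j := by
  classical
  rw [Finsupp.finset_sum_apply]
  rw [Finset.sum_congr rfl (fun i (_ : i ∈ Finset.univ) => Finsupp.single_apply (a := i) (a' := j) (b := u i))]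
  simp

noncomputable def phiFun (b : ℕ → Fin k → ℝ) (f : MvPolynomial (Fin k) ℤ) : ℝ :=
  Finsupp.sum (AddMonoidAlgebra.coeff f) (fun d a => (a : ℝ) * ∏ j : Fin k, b (d j) j)

theorem phiFun_add (b : ℕ → Fin k → ℝ) (f g : MvPolynomial (Fin k) ℤ) :
    phiFun b (f + g) = phiFun b f + phiFun b g := by
  unfold phiFun
  rw [AddMonoidAlgebra.coeff_add]
  exact Finsupp.sum_add_index' (fun d => by simp) (fun d a1 a2 => by push_cast; ring)

theorem phiFun_zero (b : ℕ → Fin k → ℝ) : phiFun b 0 = 0 := by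
  unfold phiFun
  rw [AddMonoidAlgebra.coeff_zero]
  exact Finsupp.sum_zero_index

noncomputable def phi (b : ℕ → Fin k → ℝ) : MvPolynomial (Fin k) ℤ →+ ℝ :=
  ⟨⟨phiFun b, phiFun_zero b⟩, phiFun_add b⟩

theorem phi_monomial (b : ℕ → Fin k → ℝ) (d : Fin k →₀ ℕ) (a : ℤ) :
    phi b (MvPolynomial.monomial d a) = (a:ℝ) * ∏ j : Fin k, b (d j) j := by
  rw [show phi b (MvPolynomial.monomial d a)
      = Finsupp.sum (AddMonoidAlgebra.coeff (MvPolynomial.monomial d a)) (fun d a => (a:ℝ) * ∏ j : Fin k, b (d j) j) from rfl,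
    ← MvPolynomial.single_eq_monomial, AddMonoidAlgebra.coeff_single]
  exact Finsupp.sum_single_index (by simp)

theorem phi_det (b : ℕ → Fin k → ℝ) (e : Fin k → ℕ) :
    phi b (Matrix.det (Matrix.of fun i j : Fin k => (X j : MvPolynomial (Fin k) ℤ) ^ e i))
      = Matrix.det (Matrix.of fun i j : Fin k => b (e i) j) := by
  rw [Matrix.det_apply, map_sum, Matrix.det_apply]
  apply Finset.sum_congr rfl
  intro σ _
  have h1 : (∏ i : Fin k, (Matrix.of fun i j : Fin k => (X j : MvPolynomial (Fin k) ℤ) ^ e i) (σ i) i)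
      = MvPolynomial.monomial (∑ i : Fin k, Finsupp.single i (e (σ i))) 1 := by
    rw [show (∏ i : Fin k, (Matrix.of fun i j : Fin k => (X j : MvPolynomial (Fin k) ℤ) ^ e i) (σ i) i)
        = ∏ i : Fin k, (X i : MvPolynomial (Fin k) ℤ) ^ e (σ i) from rfl, prod_X_pow]
  rw [Units.smul_def, Units.smul_def, map_zsmul, h1, phi_monomial]
  simp only [Int.cast_one, one_mul]
  congr 1
  apply Finset.prod_congr rfl
  intro j _
  rw [sum_single_apply]
  rfl

theorem phi_monomial_det (b : ℕ → Fin k → ℝ) (p : Fin k →₀ ℕ) :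
    phi b ((MvPolynomial.monomial p 1) *
        Matrix.det (Matrix.of fun i j : Fin k => (X j : MvPolynomial (Fin k) ℤ) ^ ((i:Fin k):ℕ)))
      = Matrix.det (Matrix.of fun i j : Fin k => b (p j + (i:ℕ)) j) := by
  rw [Matrix.det_apply, Finset.mul_sum, map_sum, Matrix.det_apply]
  apply Finset.sum_congr rfl
  intro σ _
  have h1 : (∏ i : Fin k, (Matrix.of fun i j : Fin k => (X j : MvPolynomial (Fin k) ℤ) ^ ((i:Fin k):ℕ)) (σ i) i)
      = MvPolynomial.monomial (∑ i : Fin k, Finsupp.single i ((σ i : ℕ))) 1 := by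
    rw [show (∏ i : Fin k, (Matrix.of fun i j : Fin k => (X j : MvPolynomial (Fin k) ℤ) ^ ((i:Fin k):ℕ)) (σ i) i)
        = ∏ i : Fin k, (X i : MvPolynomial (Fin k) ℤ) ^ ((σ i : ℕ)) from rfl, prod_X_pow]
  rw [Units.smul_def, mul_smul_comm, map_zsmul, h1, MvPolynomial.monomial_mul, one_mul,
    phi_monomial, Units.smul_def]
  simp only [Int.cast_one, one_mul]
  congr 1
  apply Finset.prod_congr rfl
  intro j _
  rw [Finsupp.add_apply, sum_single_apply]
  rfl

theorem core_expansion (b : ℕ → Fin k → ℝ) (ρ : Fin k → ℕ) (hρ : StrictMono ρ) :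
    ∃ c : MvPolynomial (Fin k) ℤ,
      (∀ p, 0 ≤ c.coeff p) ∧
      (∀ p ∈ c.support, ∀ (j : Fin k) (N : ℕ), (∀ i, ρ i < N) → (p j) + k ≤ N) ∧
      Matrix.det (Matrix.of fun i j : Fin k => b (ρ i) j)
        = ∑ p ∈ c.support, ((c.coeff p : ℤ) : ℝ) *
            Matrix.det (Matrix.of fun i j : Fin k => b (p j + (i:ℕ)) j) := by
  obtain ⟨c, h1, h2, h3⟩ := schur_exists k ρ hρ
  refine ⟨c, h1, h2, ?_⟩
  have h4 := congrArg (phi b) h3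
  rw [phi_det] at h4
  rw [h4]
  conv_lhs => rw [MvPolynomial.as_sum c]
  rw [Finset.sum_mul, map_sum]
  apply Finset.sum_congr rfl
  intro p hp
  have h5 : (MvPolynomial.monomial p (c.coeff p)) *
        Matrix.det (Matrix.of fun i j : Fin k => (X j : MvPolynomial (Fin k) ℤ) ^ ((i:Fin k):ℕ))
      = (c.coeff p) • ((MvPolynomial.monomial p 1) *
        Matrix.det (Matrix.of fun i j : Fin k => (X j : MvPolynomial (Fin k) ℤ) ^ ((i:Fin k):ℕ))) := by
    rw [MvPolynomial.smul_eq_C_mul, ← mul_assoc, MvPolynomial.C_mul_monomial, mul_one]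
  rw [h5, map_zsmul, phi_monomial_det, zsmul_eq_mul]

end Transfer

section Main
open MvPolynomial Matrix Finset

/-- Key decomposition: any aligned minor is a nonnegative combination of
row-consecutive minors. -/
theorem minor_decomp {M n k : ℕ} (A : Matrix (Fin M) (Fin n) ℝ)
    (ρ : Fin k → Fin M) (κ : Fin k → Fin n) (hρ : StrictMono ρ) :
    ∃ (c : MvPolynomial (Fin k) ℤ),
      (∀ p, 0 ≤ c.coeff p) ∧
      (∀ p ∈ c.support, ∀ j, (p j) + k ≤ M) ∧
      ∀ (F : (Fin k →₀ ℕ) → ℝ),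
        (∀ p ∈ c.support, ∀ (hp : ∀ j, (p j) + k ≤ M),
          F p = rowConsecMinor k A (fun j => p j) hp κ) →
        (A.submatrix ρ κ).det = ∑ p ∈ c.support, ((c.coeff p : ℤ) : ℝ) * F p := by
  classical
  set b : ℕ → Fin k → ℝ := fun r j => if h : r < M then A ⟨r, h⟩ (κ j) else 0 with hb
  have hρ' : StrictMono (fun i => ((ρ i : Fin M) : ℕ)) := fun a b hab => hρ hab
  obtain ⟨c, h1, h2, h3⟩ := core_expansion b (fun i => ((ρ i : Fin M) : ℕ)) hρ'
  have hbound : ∀ p ∈ c.support, ∀ j, (p j) + k ≤ M := by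
    intro p hp j
    exact h2 p hp j M (fun i => (ρ i).isLt)
  refine ⟨c, h1, hbound, ?_⟩
  intro F hF
  have hL : (A.submatrix ρ κ).det
      = Matrix.det (Matrix.of fun i j : Fin k => b ((ρ i : ℕ)) j) := by
    congr 1
    apply Matrix.ext
    intro i j
    simp only [Matrix.submatrix_apply, Matrix.of_apply, hb]
    rw [dif_pos (ρ i).isLt]
  rw [hL, h3]
  apply Finset.sum_congr rfl
  intro p hp
  congr 1
  rw [hF p hp (hbound p hp)]
  unfold rowConsecMinor
  congr 1
  apply Matrix.ext
  intro i j
  simp only [Matrix.of_apply, hb]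
  rw [dif_pos (by have := hbound p hp j; have := i.isLt; omega : p j + (i:ℕ) < M)]

end Main

end Stmt2Aux

/-- If every row-consecutive `k`-minor of `A` is `≥ 0` (resp. `≤ 0`),
then every `k`-minor of `A` is `≥ 0` (resp. `≤ 0`); consequently, if all
row-consecutive `k`-minors share the same sign then `A` is `k`-sign consistent. -/
theorem stmt_2 {M n k : ℕ} (A : Matrix (Fin M) (Fin n) ℝ)
    (hkM : k ≤ M) (hkn : k ≤ n) :
    ((∀ (p : Fin k → ℕ) (hp : ∀ j, p j + k ≤ M) (q : Fin k → Fin n),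
        StrictMono q → 0 ≤ rowConsecMinor k A p hp q) →
      ∀ (ρ : Fin k → Fin M) (κ : Fin k → Fin n), StrictMono ρ → StrictMono κ →
        0 ≤ (A.submatrix ρ κ).det) ∧
    ((∀ (p : Fin k → ℕ) (hp : ∀ j, p j + k ≤ M) (q : Fin k → Fin n),
        StrictMono q → rowConsecMinor k A p hp q ≤ 0) →
      ∀ (ρ : Fin k → Fin M) (κ : Fin k → Fin n), StrictMono ρ → StrictMono κ →
        (A.submatrix ρ κ).det ≤ 0) ∧
    (((∀ (p : Fin k → ℕ) (hp : ∀ j, p j + k ≤ M) (q : Fin k → Fin n),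
        StrictMono q → 0 ≤ rowConsecMinor k A p hp q) ∨
      (∀ (p : Fin k → ℕ) (hp : ∀ j, p j + k ≤ M) (q : Fin k → Fin n),
        StrictMono q → rowConsecMinor k A p hp q ≤ 0)) →
      SignConsistent k A) := by
  classical
  have main_ge : (∀ (p : Fin k → ℕ) (hp : ∀ j, p j + k ≤ M) (q : Fin k → Fin n),
        StrictMono q → 0 ≤ rowConsecMinor k A p hp q) →
      ∀ (ρ : Fin k → Fin M) (κ : Fin k → Fin n), StrictMono ρ → StrictMono κ →
        0 ≤ (A.submatrix ρ κ).det := by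
    intro hyp ρ κ hρ hκ
    obtain ⟨c, h1, h2, h3⟩ := Stmt2Aux.minor_decomp A ρ κ hρ
    set F : (Fin k →₀ ℕ) → ℝ := fun p =>
      if hp : ∀ j, (p j) + k ≤ M then rowConsecMinor k A (fun j => p j) hp κ else 0 with hF
    have hFspec : ∀ p ∈ c.support, ∀ (hp : ∀ j, (p j) + k ≤ M),
        F p = rowConsecMinor k A (fun j => p j) hp κ := by
      intro p hp hpb
      simp only [hF]
      rw [dif_pos hpb]
    rw [h3 F hFspec]
    apply Finset.sum_nonneg
    intro p hp
    apply mul_nonneg (by exact_mod_cast h1 p)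
    simp only [hF]
    rw [dif_pos (h2 p hp)]
    exact hyp _ _ κ hκ
  have main_le : (∀ (p : Fin k → ℕ) (hp : ∀ j, p j + k ≤ M) (q : Fin k → Fin n),
        StrictMono q → rowConsecMinor k A p hp q ≤ 0) →
      ∀ (ρ : Fin k → Fin M) (κ : Fin k → Fin n), StrictMono ρ → StrictMono κ →
        (A.submatrix ρ κ).det ≤ 0 := by
    intro hyp ρ κ hρ hκ
    obtain ⟨c, h1, h2, h3⟩ := Stmt2Aux.minor_decomp A ρ κ hρ
    set F : (Fin k →₀ ℕ) → ℝ := fun p =>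
      if hp : ∀ j, (p j) + k ≤ M then rowConsecMinor k A (fun j => p j) hp κ else 0 with hF
    have hFspec : ∀ p ∈ c.support, ∀ (hp : ∀ j, (p j) + k ≤ M),
        F p = rowConsecMinor k A (fun j => p j) hp κ := by
      intro p hp hpb
      simp only [hF]
      rw [dif_pos hpb]
    rw [h3 F hFspec]
    apply Finset.sum_nonpos
    intro p hp
    apply mul_nonpos_of_nonneg_of_nonpos (by exact_mod_cast h1 p)
    simp only [hF]
    rw [dif_pos (h2 p hp)]
    exact hyp _ _ κ hκ
  refine ⟨main_ge, main_le, ?_⟩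
  rintro (h | h)
  · exact Or.inl (main_ge h)
  · exact Or.inr (main_le h)
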